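/- arXiv:1409.3290 — 3 statements merged into one kernel-verified Lean document; each statement's English description precedes it below -/
import Mathlib

section
/- Contraction within a cluster is sound for the single-rank tree semantics: for any metaselection f, any context consisting of a tree with a hole, and trees A, B, if the hole occurs inside the left subtree of a node with cluster ID k, then plugging A and plugging (node k A B) into the hole yield the same evaluation under f, provided f k = true. -/
inductive CTree : Type
  | leaf : Bool → CTree
  | node : ℕ → CTree → CTree → CTree

def CTree.eval (f : ℕ → Bool) : CTree → Bool
  | leaf b => b
  | node k L R => if f k then L.eval f else R.eval f

/-- Contexts: a tree with a single hole. -/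
inductive Ctx : Type
  | hole : Ctx
  | nodeL : ℕ → Ctx → CTree → Ctx
  | nodeR : ℕ → CTree → Ctx → Ctx

/-- Fill the hole of a context with a tree. -/
def Ctx.fill : Ctx → CTree → CTree
  | hole, X => X
  | nodeL k C R, X => CTree.node k (C.fill X) R
  | nodeR k L C, X => CTree.node k L (C.fill X)

/-- The hole lies within the left branch of some ancestor node labeled k. -/
def Ctx.holeInLeftOf (k : ℕ) : Ctx → Prop
  | hole => False
  | nodeL k' C _ => k' = k ∨ C.holeInLeftOf k
  | nodeR _ _ C => C.holeInLeftOf k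

theorem ruleI_left_sound (f : ℕ → Bool) (Φ : Ctx) (k : ℕ) (A B : CTree)
    (hhole : Φ.holeInLeftOf k) (hf : f k = true) :
    (Φ.fill A).eval f = (Φ.fill (CTree.node k A B)).eval f := by
  have key : ∀ C : Ctx, ∀ X Y : CTree, X.eval f = Y.eval f →
      (C.fill X).eval f = (C.fill Y).eval f := by
    intro C
    induction C with
    | hole => intro X Y h; simpa [Ctx.fill] using h
    | nodeL k' C R ih => intro X Y h; simp [Ctx.fill, CTree.eval, ih X Y h]
    | nodeR k' L C ih => intro X Y h; simp [Ctx.fill, CTree.eval, ih X Y h]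
  exact key Φ A (CTree.node k A B) (by simp [CTree.eval, hf])
end

section
/- Renaming a cluster to a fresh ID weakens sharing and preserves existential truth: for trees T with a designated occurrence set S of nodes all labeled k, let T' relabel exactly the nodes in S with a fresh ID r not occurring in T; then (∃ f, eval f T = true) implies (∃ f, eval f T' = true). -/
def CTree.clusters : CTree → Finset ℕ
  | leaf _ => ∅
  | node k L R => insert k (L.clusters ∪ R.clusters)

/-- Positions of nodes are paths of Booleans (true = left). The label of the node
at a given position, if any. -/
def CTree.labelAt : CTree → List Bool → Option ℕ
  | CTree.leaf _, _ => none
  | CTree.node k _ _, [] => some k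
  | CTree.node _ L _, (true :: p) => L.labelAt p
  | CTree.node _ _ R, (false :: p) => R.labelAt p

/-- Relabel with ID r exactly the nodes whose position (relative to the starting
path `p`) is designated by S. -/
def CTree.relabel (S : List Bool → Bool) (r : ℕ) (p : List Bool) : CTree → CTree
  | CTree.leaf b => CTree.leaf b
  | CTree.node k L R =>
      CTree.node (if S p then r else k)
        (L.relabel S r (p ++ [true])) (R.relabel S r (p ++ [false]))

lemma relabel_eval_aux (k r : ℕ) (S : List Bool → Bool) (f : ℕ → Bool) :
    ∀ (U : CTree) (p : List Bool),
      (∀ q, S (p ++ q) = true → U.labelAt q = some k) →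
      r ∉ U.clusters →
      (U.relabel S r p).eval (fun n => if n = r then f k else f n) = U.eval f := by
  intro U
  induction U with
  | leaf b => intro p _ _; rfl
  | node k' L R ihL ihR =>
    intro p hS hr
    simp only [CTree.relabel, CTree.eval]
    have hk' : k' ≠ r := by
      intro h; apply hr; simp [CTree.clusters, h]
    have hL := ihL (p ++ [true]) (fun q hq => by
      have := hS (true :: q) (by simpa using hq)
      simpa [CTree.labelAt] using this)
      (fun h => hr (by simp [CTree.clusters]; tauto))
    have hR := ihR (p ++ [false]) (fun q hq => by
      have := hS (false :: q) (by simpa using hq)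
      simpa [CTree.labelAt] using this)
      (fun h => hr (by simp [CTree.clusters]; tauto))
    by_cases hp : S p
    · have : k' = k := by
        have := hS [] (by simpa using hp)
        simpa [CTree.labelAt] using this
      subst this
      simp [hp, hL, hR]
    · simp [hp, hk', hL, hR]

theorem ruleIV_rename_fresh_preserves_existential_truth
    (T : CTree) (k r : ℕ) (S : List Bool → Bool)
    (hS : ∀ p : List Bool, S p = true → T.labelAt p = some k)
    (hr : r ∉ T.clusters)
    (h : ∃ f : ℕ → Bool, T.eval f = true) :
    ∃ f : ℕ → Bool, (T.relabel S r []).eval f = true := by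
  obtain ⟨f, hf⟩ := h
  refine ⟨fun n => if n = r then f k else f n, ?_⟩
  rw [relabel_eval_aux k r S f T [] (fun q hq => hS q (by simpa using hq)) hr]
  exact hf
end

section
/- The dual conservativity for conjunctive clusters: if all node labels of a tree are pairwise distinct, then (∀ f, eval f T = true) iff the classical conjunctive reading of T is true. -/
/-- The list of node labels (cluster IDs) of a tree. -/
def CTree.labels : CTree → List ℕ
  | leaf _ => []
  | node k L R => k :: (L.labels ++ R.labels)

/-- Classical conjunctive reading of a tree. -/
def CTree.classicalEvalAnd : CTree → Bool
  | leaf b => b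
  | node _ L R => L.classicalEvalAnd && R.classicalEvalAnd

lemma CTree.eval_congr (T : CTree) (f g : ℕ → Bool)
    (h : ∀ n ∈ T.labels, f n = g n) : T.eval f = T.eval g := by
  induction T with
  | leaf b => rfl
  | node k L R ihL ihR =>
    simp only [CTree.eval, CTree.labels] at *
    rw [h k (by simp)]
    rcases g k with _ | _ <;> simp
    · exact ihR fun n hn => h n (by simp [hn])
    · exact ihL fun n hn => h n (by simp [hn])

theorem classical_cirquents_conjunctive (T : CTree)
    (h : T.labels.Nodup) :
    (∀ f : ℕ → Bool, T.eval f = true) ↔ T.classicalEvalAnd = true := by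
  induction T with
  | leaf b => simp [CTree.eval, CTree.classicalEvalAnd]
  | node k L R ihL ihR =>
    simp only [CTree.labels, List.nodup_cons, List.nodup_append] at h
    obtain ⟨hk, hL, hR, _⟩ := h
    simp only [CTree.classicalEvalAnd, Bool.and_eq_true]
    rw [← ihL hL, ← ihR hR]
    constructor
    · intro hall
      constructor
      · intro f
        have := hall (fun n => if n = k then true else f n)
        simp only [CTree.eval, if_pos rfl] at this
        rw [← this]
        exact L.eval_congr _ _ fun n hn => by
          simp [show n ≠ k from fun e => hk (e ▸ List.mem_append_left _ hn)]
      · intro f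
        have := hall (fun n => if n = k then false else f n)
        simp only [CTree.eval, if_pos rfl, if_neg] at this
        rw [← this]
        exact R.eval_congr _ _ fun n hn => by
          simp [show n ≠ k from fun e => hk (e ▸ List.mem_append_right _ hn)]
    · rintro ⟨h1, h2⟩ f
      simp only [CTree.eval]
      split <;> [exact h1 f; exact h2 f]
end
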